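/- Let M ≥ 2, let α ∈ R^M have Q-linearly independent coordinates, and let S = {k_0, ..., k_N} ⊆ Z^M be indexed so that k_0^T α < ... < k_N^T α. Then the function ν is unbounded on the set B(α, S) = {a ∈ Z^M : 2||S||_∞ < ν(a) and k_0^T a < ... < k_N^T a}; that is, for every B > 0 there exists a ∈ B(α, S) with ν(a) > B. -/

import Mathlib

/-!
Take `a = round (Q • α)` for a large natural number `Q`. For a fixed integer vector `v`,
the pairing `v ⬝ a` differs from `Q (v ⬝ α)` by at most `‖v‖₁ / 2`, so once `Q` is large
it has the sign of `v ⬝ α`. Only finitely many conditions are needed: the gaps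
`k_{n+1} - k_n` must stay positive, and every nonzero `b` with `‖b‖_∞ ≤ C` must satisfy
`b ⬝ a ≠ 0`, which holds because `b ⬝ α ≠ 0` by the `ℚ`-linear independence of `α`.
Hence `ν(a) > C` for any prescribed `C`.
-/

def supNorm {M : ℕ} (b : Fin M → ℤ) : ℕ := Finset.univ.sup fun i => (b i).natAbs

open Filter

section Rounding

variable {ι : Type*} [Fintype ι]

theorem sum_intCast_mul_ne_zero_of_linearIndependent {α : ι → ℝ}
    (hα : LinearIndependent ℚ α) {b : ι → ℤ} (hb : b ≠ 0) :
    ∑ i, (b i : ℝ) * α i ≠ 0 := by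
  have hℤ : LinearIndependent ℤ α := hα.restrict_scalars' ℤ
  intro h
  refine hb (funext (Fintype.linearIndependent_iff.mp hℤ b ?_))
  simpa only [zsmul_eq_mul] using h

theorem abs_sum_mul_round_sub_le (v : ι → ℤ) (α : ι → ℝ) (t : ℝ) :
    |∑ i, (v i : ℝ) * round (t * α i) - t * ∑ i, (v i : ℝ) * α i| ≤
      (∑ i, |(v i : ℝ)|) / 2 := by
  calc |∑ i, (v i : ℝ) * round (t * α i) - t * ∑ i, (v i : ℝ) * α i|
      = |∑ i, (v i : ℝ) * (round (t * α i) - t * α i)| := by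
        rw [Finset.mul_sum, ← Finset.sum_sub_distrib]
        congr 1
        exact Finset.sum_congr rfl fun i _ => by ring
    _ ≤ ∑ i, |(v i : ℝ)| * (1 / 2) := by
        refine (Finset.abs_sum_le_sum_abs _ _).trans (Finset.sum_le_sum fun i _ => ?_)
        rw [abs_mul, abs_sub_comm]
        exact mul_le_mul_of_nonneg_left (abs_sub_round _) (abs_nonneg _)
    _ = (∑ i, |(v i : ℝ)|) / 2 := by rw [← Finset.sum_mul]; ring

theorem eventually_pos_sum_mul_round {v : ι → ℤ} {α : ι → ℝ}
    (hv : 0 < ∑ i, (v i : ℝ) * α i) :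
    ∀ᶠ Q : ℕ in atTop, 0 < ∑ i, v i * round ((Q : ℝ) * α i) := by
  set s := ∑ i, (v i : ℝ) * α i
  filter_upwards [tendsto_natCast_atTop_atTop.eventually_gt_atTop ((∑ i, |(v i : ℝ)|) / 2 / s)]
    with Q hQ
  have hQs : (∑ i, |(v i : ℝ)|) / 2 < Q * s := (div_lt_iff₀ hv).mp hQ
  have herr := (abs_le.mp (abs_sum_mul_round_sub_le v α Q)).1
  have : (0 : ℝ) < ∑ i, (v i : ℝ) * round ((Q : ℝ) * α i) := by linarith
  exact_mod_cast this

theorem eventually_sum_mul_round_ne_zero {v : ι → ℤ} {α : ι → ℝ}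
    (hv : ∑ i, (v i : ℝ) * α i ≠ 0) :
    ∀ᶠ Q : ℕ in atTop, ∑ i, v i * round ((Q : ℝ) * α i) ≠ 0 := by
  rcases hv.lt_or_gt with hneg | hpos
  · have hneg' : 0 < ∑ i, ((-v) i : ℝ) * α i := by
      simpa only [Pi.neg_apply, Int.cast_neg, neg_mul, Finset.sum_neg_distrib, neg_pos]
    filter_upwards [eventually_pos_sum_mul_round hneg'] with Q hQ
    simp only [Pi.neg_apply, neg_mul, Finset.sum_neg_distrib, neg_pos] at hQ
    exact hQ.ne
  · filter_upwards [eventually_pos_sum_mul_round hpos] with Q hQ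
    exact hQ.ne'

theorem eventually_strictMono_sum_mul_round {N : ℕ} {k : Fin (N + 1) → ι → ℤ}
    {α : ι → ℝ}
    (hk : StrictMono fun n => ∑ i, (k n i : ℝ) * α i) :
    ∀ᶠ Q : ℕ in atTop, StrictMono fun n => ∑ i, k n i * round ((Q : ℝ) * α i) := by
  simp only [Fin.strictMono_iff_lt_succ] at hk ⊢
  refine eventually_all.mpr fun n => ?_
  have hgap : 0 < ∑ i, ((k n.succ - k n.castSucc) i : ℝ) * α i := by
    simpa only [Pi.sub_apply, Int.cast_sub, sub_mul, Finset.sum_sub_distrib, sub_pos] using hk n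
  filter_upwards [eventually_pos_sum_mul_round hgap] with Q hQ
  simpa only [Pi.sub_apply, sub_mul, Finset.sum_sub_distrib, sub_pos] using hQ

end Rounding

theorem supNorm_le_iff_mem_piFinset {M : ℕ} {b : Fin M → ℤ} {C : ℕ} :
    supNorm b ≤ C ↔ b ∈ Fintype.piFinset fun _ => Finset.Icc (-(C : ℤ)) C := by
  simp only [supNorm, Finset.sup_le_iff, Finset.mem_univ, true_implies, Fintype.mem_piFinset,
    Finset.mem_Icc, ← abs_le, Int.abs_eq_natAbs]
  exact forall_congr' fun i => by omega

theorem eventually_lt_supNorm_of_sum_mul_round_eq_zero {M : ℕ} {α : Fin M → ℝ}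
    (hα : LinearIndependent ℚ α) (C : ℕ) :
    ∀ᶠ Q : ℕ in atTop, ∀ b : Fin M → ℤ, b ≠ 0 →
      ∑ i, b i * round ((Q : ℝ) * α i) = 0 → C < supNorm b := by
  have hbox : ∀ᶠ Q : ℕ in atTop,
      ∀ b ∈ Fintype.piFinset fun _ => Finset.Icc (-(C : ℤ)) C,
        b ≠ 0 → ∑ i, b i * round ((Q : ℝ) * α i) ≠ 0 := by
    refine (eventually_all_finset _).mpr fun b _ => ?_
    rcases eq_or_ne b 0 with rfl | hb
    · exact .of_forall fun _ h => (h rfl).elim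
    · filter_upwards [eventually_sum_mul_round_ne_zero
        (sum_intCast_mul_ne_zero_of_linearIndependent hα hb)] with Q hQ _ using hQ
  filter_upwards [hbox] with Q hQ b hb h0
  by_contra! hle
  exact hQ b (supNorm_le_iff_mem_piFinset.mp hle) hb h0

theorem nu_unbounded_on_B_general (M N : ℕ) (α : Fin M → ℝ)
    (hα : LinearIndependent ℚ α) (k : Fin (N + 1) → Fin M → ℤ)
    (hk : StrictMono fun n => ∑ i, (k n i : ℝ) * α i) :
    ∀ B : ℕ, ∃ a : Fin M → ℤ,
      ((∀ b : Fin M → ℤ, b ≠ 0 → (∑ i, b i * a i) = 0 →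
          2 * ((Finset.univ.image k).sup supNorm) < supNorm b) ∧
        StrictMono fun n => ∑ i, k n i * a i) ∧
      (∀ b : Fin M → ℤ, b ≠ 0 → (∑ i, b i * a i) = 0 → B < supNorm b) := by
  intro B
  have hS := eventually_lt_supNorm_of_sum_mul_round_eq_zero hα
    (2 * (Finset.univ.image k).sup supNorm)
  have hB := eventually_lt_supNorm_of_sum_mul_round_eq_zero hα B
  obtain ⟨Q, hS, hB, hmono⟩ := (hS.and (hB.and (eventually_strictMono_sum_mul_round hk))).exists
  exact ⟨fun i => round ((Q : ℝ) * α i), ⟨hS, hmono⟩, hB⟩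

theorem nu_unbounded_on_B (M N : ℕ) (hM : 2 ≤ M) (α : Fin M → ℝ)
    (hα : LinearIndependent ℚ α) (k : Fin (N + 1) → Fin M → ℤ)
    (hk : StrictMono fun n => ∑ i, (k n i : ℝ) * α i) :
    ∀ B : ℕ, ∃ a : Fin M → ℤ,
      ((∀ b : Fin M → ℤ, b ≠ 0 → (∑ i, b i * a i) = 0 →
          2 * ((Finset.univ.image k).sup supNorm) < supNorm b) ∧
        StrictMono fun n => ∑ i, k n i * a i) ∧
      (∀ b : Fin M → ℤ, b ≠ 0 → (∑ i, b i * a i) = 0 → B < supNorm b) :=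
  nu_unbounded_on_B_general M N α hα k hk
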